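/- Let n ≥ 3 be odd and Γ₁, …, Γₙ ∈ S² with cyclic indices. Then min_i arccos(Γᵢᵀ Γᵢ₊₁) = π − π/n if and only if there exist u, v ∈ S² with uᵀv = 0 such that Γᵢ = exp((i−1)(π − π/n) û) v for all i = 1, …, n, where û is the cross-product matrix of u. -/

import Mathlib

open Matrix Real

noncomputable section

/-- The hat (cross-product) matrix of `k`, satisfying `hat k *ᵥ y = k ×₃ y`. -/
def hat (k : Fin 3 → ℝ) : Matrix (Fin 3) (Fin 3) ℝ :=
  !![0, -k 2, k 1; k 2, 0, -k 0; -k 1, k 0, 0]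

/-- Membership in the unit 2-sphere. -/
def S2 (x : Fin 3 → ℝ) : Prop := x ⬝ᵥ x = 1

/-- Geodesic distance on the unit sphere. -/
def geo (x y : Fin 3 → ℝ) : ℝ := Real.arccos (x ⬝ᵥ y)

/-!
Flipping the sign of every other vertex, `yᵢ = (-1)ⁱ Γᵢ`, turns edges of length at least
`π - π / n` into steps of length at most `π / n`, and since `n` is odd the chain `y₀, …, yₙ`
ends at the antipode `-y₀`, at distance `π = n · (π / n)`. The triangle inequality is then tight
all along the chain, so the `yᵢ` are equally spaced by `π / n` on a half great circle through
`y₀`; undoing the flips places `Γᵢ` at angle `i (π - π / n)` on the same great circle.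
Conversely, such points have all edges of length `π - π / n`, the closing edge included because
`n (π - π / n) = (n - 1) π` is a multiple of `2π`. Rodrigues' formula identifies the rotation
`exp (t û) v` with the point at angle `t` on the great circle through `v` and `u × v`.
-/

section GreatCircle

variable {ι : Type*} {v w : ι → ℝ}

def greatCircle (v w : ι → ℝ) (t : ℝ) : ι → ℝ := cos t • v + sin t • w

theorem greatCircle_zero : greatCircle v w 0 = v := by simp [greatCircle]

theorem greatCircle_nat_mul_two_pi (k : ℕ) : greatCircle v w (k * (2 * π)) = v := by
  rw [greatCircle, cos_nat_mul_two_pi, show (k : ℝ) * (2 * π) = (2 * k : ℕ) * π by push_cast; ring,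
    sin_nat_mul_pi, one_smul, zero_smul, add_zero]

theorem neg_one_pow_smul_greatCircle (i : ℕ) (δ : ℝ) :
    (-1 : ℝ) ^ i • greatCircle v w (i * δ) = greatCircle v (-w) (i * (π - δ)) := by
  rw [greatCircle, greatCircle, mul_sub, cos_nat_mul_pi_sub, sin_nat_mul_pi_sub]
  module

variable [Fintype ι]

theorem greatCircle_dotProduct_greatCircle (hv : v ⬝ᵥ v = 1) (hw : w ⬝ᵥ w = 1)
    (hvw : v ⬝ᵥ w = 0) (s t : ℝ) :
    greatCircle v w s ⬝ᵥ greatCircle v w t = cos (t - s) := by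
  simp only [greatCircle, add_dotProduct, dotProduct_add, smul_dotProduct, dotProduct_smul,
    smul_eq_mul, hv, hw, hvw, dotProduct_comm w v, cos_sub]
  ring

theorem eq_greatCircle_of_dotProduct (hv : v ⬝ᵥ v = 1) (hw : w ⬝ᵥ w = 1) (hvw : v ⬝ᵥ w = 0)
    {y : ι → ℝ} (hy : y ⬝ᵥ y = 1) {t : ℝ} (hvy : v ⬝ᵥ y = cos t) (hwy : w ⬝ᵥ y = sin t) :
    y = greatCircle v w t := by
  rw [← sub_eq_zero, ← dotProduct_self_eq_zero]
  simp only [greatCircle, sub_dotProduct, dotProduct_sub, add_dotProduct, dotProduct_add,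
    smul_dotProduct, dotProduct_smul, smul_eq_mul, hv, hw, hvw, hy, hvy, hwy,
    dotProduct_comm y v, dotProduct_comm y w, dotProduct_comm w v]
  linear_combination -sin_sq_add_cos_sq t

theorem exists_eq_greatCircle (hv : v ⬝ᵥ v = 1) {y : ι → ℝ} (hy : y ⬝ᵥ y = 1) {t : ℝ}
    (hvy : v ⬝ᵥ y = cos t) (ht : sin t ≠ 0) :
    ∃ w, w ⬝ᵥ w = 1 ∧ v ⬝ᵥ w = 0 ∧ y = greatCircle v w t := by
  refine ⟨(sin t)⁻¹ • (y - cos t • v), ?_, ?_, ?_⟩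
  · simp only [smul_dotProduct, dotProduct_smul, sub_dotProduct, dotProduct_sub, smul_eq_mul,
      hv, hy, hvy, dotProduct_comm y v]
    field_simp
    linear_combination -sin_sq_add_cos_sq t
  · simp only [dotProduct_smul, dotProduct_sub, dotProduct_smul, smul_eq_mul, hv, hvy]
    ring
  · rw [greatCircle, smul_smul, mul_inv_cancel₀ ht, one_smul]
    abel

theorem exists_forall_eq_greatCircle {y : ℕ → ι → ℝ} (hy : ∀ i, y i ⬝ᵥ y i = 1) {n : ℕ}
    (hn : 1 < n) {δ : ℝ} (hδ : 0 < δ) (hnδ : n * δ ≤ π)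
    (hfirst : ∀ i < n, y 0 ⬝ᵥ y i = cos (i * δ))
    (hstep : ∀ i, i + 1 < n → y i ⬝ᵥ y (i + 1) = cos δ) :
    ∃ w, w ⬝ᵥ w = 1 ∧ y 0 ⬝ᵥ w = 0 ∧ ∀ i < n, y i = greatCircle (y 0) w (i * δ) := by
  have hsin {i : ℕ} (hi0 : 0 < i) (hin : i < n) : 0 < sin (i * δ) := by
    have : (i : ℝ) < n := by exact_mod_cast hin
    apply sin_pos_of_pos_of_lt_pi (by positivity)
    nlinarith
  obtain ⟨w, hw, hvw, hy1⟩ := exists_eq_greatCircle (hy 0) (hy 1)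
    (by simpa using hfirst 1 hn) (by simpa using (hsin one_pos hn).ne')
  refine ⟨w, hw, hvw, fun i hi => ?_⟩
  rcases Nat.eq_zero_or_pos i with rfl | hi0
  · simp [greatCircle_zero]
  induction i, hi0 using Nat.le_induction with
  | base => simpa using hy1
  | succ i hi1 ih =>
    have hyi := ih (by omega)
    refine eq_greatCircle_of_dotProduct (hy 0) hw hvw (hy _) (hfirst _ hi) ?_
    have h := hstep i hi
    rw [hyi, greatCircle, add_dotProduct, smul_dotProduct, smul_dotProduct, hfirst _ hi,
      smul_eq_mul, smul_eq_mul] at h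
    have hcos : cos δ = cos ((i + 1 : ℕ) * δ - i * δ) := by push_cast; ring_nf
    rw [hcos, cos_sub] at h
    exact mul_left_cancel₀ (hsin hi1 (by omega)).ne' (by linear_combination h)

end GreatCircle

theorem hat_mulVec (u y : Fin 3 → ℝ) : hat u *ᵥ y = u ⨯₃ y := by
  ext i
  fin_cases i <;> simp [hat, cross_apply, mulVec, vecHead, vecTail] <;> ring

theorem S2.cross {u v : Fin 3 → ℝ} (hu : S2 u) (hv : S2 v) (huv : u ⬝ᵥ v = 0) :
    S2 (u ⨯₃ v) := by
  rw [S2, cross_dot_cross, hu, hv, huv, dotProduct_comm v u, huv]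
  ring

theorem exp_smul_mulVec_of_mulVec_eq {m : Type*} [Fintype m] [DecidableEq m]
    {A : Matrix m m ℝ} {v w : m → ℝ} (hv : A *ᵥ v = w) (hw : A *ᵥ w = -v) (t : ℝ) :
    NormedSpace.exp (t • A) *ᵥ v = greatCircle v w t := by
  -- any matrix norm will do: `NormedSpace.exp` does not depend on it
  let : NormedRing (Matrix m m ℝ) := Matrix.linftyOpNormedRing
  let : NormedAlgebra ℝ (Matrix m m ℝ) := Matrix.linftyOpNormedAlgebra
  have heven (k : ℕ) : A ^ (2 * k) *ᵥ v = (-1 : ℝ) ^ k • v := by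
    induction k with
    | zero => simp
    | succ k ih =>
      rw [mul_add, pow_add, ← mulVec_mulVec, sq, ← mulVec_mulVec, hv, hw, mulVec_neg, ih,
        pow_succ]
      module
  have hodd (k : ℕ) : A ^ (2 * k + 1) *ᵥ v = (-1 : ℝ) ^ k • w := by
    rw [pow_succ', ← mulVec_mulVec, heven, mulVec_smul, hv]
  have hterm (k : ℕ) : ((k.factorial : ℝ)⁻¹ • (t • A) ^ k) *ᵥ v =
      ((k.factorial : ℝ)⁻¹ * t ^ k) • (A ^ k *ᵥ v) := by
    rw [smul_pow, smul_smul, smul_mulVec]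
  have hexp : HasSum (fun k => ((k.factorial : ℝ)⁻¹ • (t • A) ^ k) *ᵥ v)
      (NormedSpace.exp (t • A) *ᵥ v) :=
    (NormedSpace.exp_series_hasSum_exp' (𝕂 := ℝ) (t • A)).map
      ((Matrix.mulVecBilin ℝ ℝ).flip v) (continuous_id.matrix_mulVec continuous_const)
  refine hexp.unique (HasSum.even_add_odd ?_ ?_)
  · convert (Real.hasSum_cos t).smul_const v using 2 with k
    rw [hterm, heven, smul_smul]
    ring_nf
  · convert (Real.hasSum_sin t).smul_const w using 2 with k
    rw [hterm, hodd, smul_smul]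
    ring_nf

theorem exp_smul_hat_mulVec {u v : Fin 3 → ℝ} (hu : S2 u) (huv : u ⬝ᵥ v = 0) (t : ℝ) :
    NormedSpace.exp (t • hat u) *ᵥ v = greatCircle v (u ⨯₃ v) t := by
  refine exp_smul_mulVec_of_mulVec_eq (hat_mulVec u v) ?_ t
  rw [hat_mulVec, cross_cross_eq_smul_sub_smul', huv, zero_smul, zero_sub, hu, one_smul]

theorem exp_smul_hat_cross_mulVec {a b : Fin 3 → ℝ} (ha : S2 a) (hb : S2 b) (hab : a ⬝ᵥ b = 0)
    (t : ℝ) : NormedSpace.exp (t • hat (a ⨯₃ b)) *ᵥ a = greatCircle a b t := by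
  have hba : (a ⨯₃ b) ⨯₃ a = b := by
    rw [cross_cross_eq_smul_sub_smul, ha, dotProduct_comm, hab, one_smul, zero_smul, sub_zero]
  rw [exp_smul_hat_mulVec (ha.cross hb hab) (by rw [dotProduct_comm, dot_self_cross]), hba]

section Geo

variable {x y z : Fin 3 → ℝ}

theorem inner_toLp_toLp_eq_dotProduct (x y : Fin 3 → ℝ) :
    inner ℝ (WithLp.toLp 2 x : EuclideanSpace ℝ (Fin 3)) (WithLp.toLp 2 y) = x ⬝ᵥ y := by
  simp [EuclideanSpace.inner_toLp_toLp, dotProduct_comm]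

theorem S2.norm_toLp (hx : S2 x) : ‖(WithLp.toLp 2 x : EuclideanSpace ℝ (Fin 3))‖ = 1 := by
  rw [← pow_eq_one_iff_of_nonneg (norm_nonneg _) two_ne_zero, ← real_inner_self_eq_norm_sq,
    inner_toLp_toLp_eq_dotProduct]
  exact hx

theorem geo_eq_angle (hx : S2 x) (hy : S2 y) :
    geo x y = InnerProductGeometry.angle (WithLp.toLp 2 x : EuclideanSpace ℝ (Fin 3))
      (WithLp.toLp 2 y) := by
  rw [geo, InnerProductGeometry.angle, inner_toLp_toLp_eq_dotProduct, hx.norm_toLp, hy.norm_toLp,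
    mul_one, div_one]

theorem cos_geo (hx : S2 x) (hy : S2 y) : cos (geo x y) = x ⬝ᵥ y := by
  rw [geo_eq_angle hx hy, InnerProductGeometry.cos_angle, inner_toLp_toLp_eq_dotProduct,
    hx.norm_toLp, hy.norm_toLp, mul_one, div_one]

theorem geo_le_geo_add_geo (hx : S2 x) (hy : S2 y) (hz : S2 z) :
    geo x z ≤ geo x y + geo y z := by
  rw [geo_eq_angle hx hy, geo_eq_angle hy hz, geo_eq_angle hx hz]
  exact InnerProductGeometry.angle_le_angle_add_angle _ _ _

theorem geo_self (hx : S2 x) : geo x x = 0 := by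
  rw [geo, hx, arccos_one]

theorem geo_neg_right : geo x (-y) = π - geo x y := by
  rw [geo, geo, dotProduct_neg, arccos_neg]

end Geo

section Chain

variable {y : ℕ → Fin 3 → ℝ} {n : ℕ} {δ : ℝ}

theorem geo_le_of_forall_geo_succ_le (hy : ∀ i, S2 (y i))
    (hstep : ∀ i < n, geo (y i) (y (i + 1)) ≤ δ) {i k : ℕ} (hik : i + k ≤ n) :
    geo (y i) (y (i + k)) ≤ k * δ := by
  induction k with
  | zero => simp [geo_self (hy i)]
  | succ k ih =>
    calc geo (y i) (y (i + (k + 1)))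
        ≤ geo (y i) (y (i + k)) + geo (y (i + k)) (y (i + k + 1)) :=
          geo_le_geo_add_geo (hy _) (hy _) (hy _)
      _ ≤ k * δ + δ := add_le_add (ih (by omega)) (hstep _ (by omega))
      _ = (k + 1 : ℕ) * δ := by push_cast; ring

theorem geo_eq_of_forall_geo_succ_le (hy : ∀ i, S2 (y i))
    (hstep : ∀ i < n, geo (y i) (y (i + 1)) ≤ δ) (hend : n * δ ≤ geo (y 0) (y n))
    {i : ℕ} (hi : i ≤ n) : geo (y 0) (y i) = i * δ := by
  have hinit := geo_le_of_forall_geo_succ_le hy hstep (i := 0) (k := i) (by omega)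
  rw [zero_add] at hinit
  refine le_antisymm hinit ?_
  have hrest := geo_le_of_forall_geo_succ_le hy hstep (i := i) (k := n - i) (by omega)
  rw [Nat.add_sub_cancel' hi, Nat.cast_sub hi] at hrest
  linarith [geo_le_geo_add_geo (hy 0) (hy i) (hy n)]

theorem geo_succ_eq_of_forall_geo_succ_le (hy : ∀ i, S2 (y i))
    (hstep : ∀ i < n, geo (y i) (y (i + 1)) ≤ δ) (hend : n * δ ≤ geo (y 0) (y n))
    {i : ℕ} (hi : i < n) : geo (y i) (y (i + 1)) = δ := by
  refine le_antisymm (hstep i hi) ?_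
  have h := geo_le_geo_add_geo (hy 0) (hy i) (hy (i + 1))
  rw [geo_eq_of_forall_geo_succ_le hy hstep hend hi.le,
    geo_eq_of_forall_geo_succ_le hy hstep hend hi] at h
  push_cast at h
  linarith

end Chain

theorem neg_one_pow_smul_dotProduct_neg_one_pow_smul {ι : Type*} [Fintype ι] (i : ℕ)
    (x y : ι → ℝ) : ((-1 : ℝ) ^ i • x) ⬝ᵥ ((-1 : ℝ) ^ i • y) = x ⬝ᵥ y := by
  rw [smul_dotProduct, dotProduct_smul, smul_smul, ← mul_pow]
  simp

theorem exists_eq_greatCircle_of_forall_le_geo {n : ℕ} (hn : 1 < n) (hodd : Odd n)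
    {Γ : ℕ → Fin 3 → ℝ} (hS : ∀ i, S2 (Γ i)) (hper : Γ n = Γ 0)
    (hedge : ∀ i < n, π - π / n ≤ geo (Γ i) (Γ (i + 1))) :
    ∃ a b, S2 a ∧ S2 b ∧ a ⬝ᵥ b = 0 ∧ ∀ i < n, Γ i = greatCircle a b (i * (π - π / n)) := by
  obtain ⟨y, hy_def⟩ : ∃ y : ℕ → Fin 3 → ℝ, ∀ i, y i = (-1 : ℝ) ^ i • Γ i := ⟨_, fun _ => rfl⟩
  have hy (i : ℕ) : S2 (y i) := by
    rw [S2, hy_def, neg_one_pow_smul_dotProduct_neg_one_pow_smul]; exact hS i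
  have hgeo_y (i : ℕ) : geo (y i) (y (i + 1)) = π - geo (Γ i) (Γ (i + 1)) := by
    rw [hy_def, hy_def, pow_succ, mul_neg_one, neg_smul, geo_neg_right, geo,
      neg_one_pow_smul_dotProduct_neg_one_pow_smul, geo]
  have hstep (i : ℕ) (hi : i < n) : geo (y i) (y (i + 1)) ≤ π / n := by
    linarith [hgeo_y i, hedge i hi]
  have hnδ : n * (π / n) = π := mul_div_cancel₀ π (by positivity)
  have hend : n * (π / n) ≤ geo (y 0) (y n) := by
    have hyn : y n = -y 0 := by
      rw [hy_def, hy_def, hodd.neg_one_pow, hper, pow_zero, one_smul, neg_one_smul]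
    rw [hyn, geo_neg_right, geo_self (hy 0), sub_zero, hnδ]
  obtain ⟨w, hw, h0w, hyw⟩ := exists_forall_eq_greatCircle hy hn (by positivity) hnδ.le
    (fun i hi => by rw [← cos_geo (hy 0) (hy i), geo_eq_of_forall_geo_succ_le hy hstep hend hi.le])
    (fun i hi => by rw [← cos_geo (hy i) (hy (i + 1)),
      geo_succ_eq_of_forall_geo_succ_le hy hstep hend (by omega)])
  refine ⟨y 0, -w, hy 0, by rwa [S2, neg_dotProduct_neg], by rw [dotProduct_neg, h0w, neg_zero],
    fun i hi => ?_⟩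
  rw [← neg_one_pow_smul_greatCircle, ← hyw i hi, hy_def, smul_smul, ← mul_pow]
  simp

theorem forall_geo_eq_of_eq_greatCircle {n : ℕ} (hodd : Odd n)
    {Γ : ℕ → Fin 3 → ℝ} (hper : Γ n = Γ 0) {v w : Fin 3 → ℝ} (hv : S2 v) (hw : S2 w)
    (hvw : v ⬝ᵥ w = 0) (hΓ : ∀ i < n, Γ i = greatCircle v w (i * (π - π / n))) :
    ∀ i < n, geo (Γ i) (Γ (i + 1)) = π - π / n := by
  have hn : (1 : ℝ) ≤ n := Nat.one_le_cast.2 hodd.pos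
  have hclose : Γ n = greatCircle v w (n * (π - π / n)) := by
    obtain ⟨k, rfl⟩ := hodd
    rw [hper, hΓ 0 (by omega), Nat.cast_zero, zero_mul, greatCircle_zero,
      show ((2 * k + 1 : ℕ) : ℝ) * (π - π / (2 * k + 1 : ℕ)) = k * (2 * π) by
        field_simp; push_cast; ring,
      greatCircle_nat_mul_two_pi]
  intro i hi
  have hnext : Γ (i + 1) = greatCircle v w ((i + 1 : ℕ) * (π - π / n)) := by
    obtain h | h := (show i + 1 ≤ n from hi).eq_or_lt
    · rw [h, hclose]
    · exact hΓ _ h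
  rw [hΓ i hi, hnext, geo, greatCircle_dotProduct_greatCircle hv hw hvw,
    show ((i + 1 : ℕ) : ℝ) * (π - π / n) - i * (π - π / n) = π - π / n by push_cast; ring,
    arccos_cos (sub_nonneg.2 (div_le_self pi_pos.le hn)) (sub_le_self _ (by positivity))]

theorem stmt_6 (n : ℕ) (hn : 3 ≤ n) (hodd : Odd n) (Γ : ℕ → Fin 3 → ℝ)
    (hS : ∀ i, S2 (Γ i)) (hper : Γ n = Γ 0) :
    (Finset.range n).inf' (Finset.nonempty_range_iff.mpr (by omega))
        (fun i => geo (Γ i) (Γ (i + 1))) = π - π / n ↔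
      ∃ u v : Fin 3 → ℝ, S2 u ∧ S2 v ∧ u ⬝ᵥ v = 0 ∧
        ∀ i < n, Γ i = NormedSpace.exp (((i : ℝ) * (π - π / n)) • hat u) *ᵥ v := by
  constructor
  · intro h
    obtain ⟨a, b, ha, hb, hab, hΓ⟩ := exists_eq_greatCircle_of_forall_le_geo (by omega) hodd hS hper
      fun i hi => h ▸ Finset.inf'_le _ (Finset.mem_range.2 hi)
    exact ⟨a ⨯₃ b, a, ha.cross hb hab, ha, by rw [dotProduct_comm, dot_self_cross],
      fun i hi => by rw [exp_smul_hat_cross_mulVec ha hb hab, hΓ i hi]⟩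
  · rintro ⟨u, v, hu, hv, huv, hΓ⟩
    have hedge := forall_geo_eq_of_eq_greatCircle hodd hper hv (hu.cross hv huv)
      (dot_cross_self u v) fun i hi => by rw [hΓ i hi, exp_smul_hat_mulVec hu huv]
    rw [Finset.inf'_congr _ rfl fun i hi => hedge i (Finset.mem_range.1 hi), Finset.inf'_const]
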